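/- arXiv:1504.03814 — 5 statements merged into one kernel-verified Lean document; each statement's English description precedes it below -/
import Mathlib

section
/- Let {p_m}_{m≥1} and p be probability density functions on ℝ such that: (C1) there exists M ∈ (0,∞) with p_m(y) ≤ M and p(y) ≤ M for all y ∈ ℝ and all m ≥ 1; (C2) there exists a non-negative, non-decreasing function l : [0,∞) → [0,∞) that is super-logarithmic and a finite L > 0 such that ∫ l(|y|) p_m(y) dy ≤ L for all m and ∫ l(|y|) p(y) dy ≤ L. If p_m(y) → p(y) pointwise for every y ∈ ℝ, then the differential entropies converge: h(p_m) → h(p). -/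
/-!
The integrands `pₘ log pₘ` are uniformly bounded (as `0 ≤ pₘ ≤ M`), so dominated convergence
applies on `[-R, R]`; it remains to show that their tails are uniformly small.
Outside `[-R, R]`, where `l(|y|) ≥ κ log |y| ≥ κ`, the positive part satisfies
`t log t ≤ (log⁺ M) t ≤ (log⁺ M / κ) l(|y|) t`. For the negative part, either `t ≤ y⁻⁴`, and then
`-t log t ≤ 2 √t ≤ 2 y⁻²`, or `-log t ≤ 4 log |y| ≤ (4 / κ) l(|y|)`. Hence the tail integral is at
most `(log⁺ M + 4) L / κ` plus the tail of the integrable function `4 (1 + y²)⁻¹`, and both are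
small once `κ` and then `R` are large.
-/

open MeasureTheory Real Filter Topology

/-- The differential entropy `h(p) = -∫ p ln p` of a density `p` on `ℝ`
(with the convention `0 ln 0 = 0`, which holds since `Real.log 0 = 0`). -/
noncomputable def diffEntropy (p : ℝ → ℝ) : ℝ := -∫ y, p y * Real.log (p y)

/-- `p` is a probability density function on `ℝ`. -/
def IsPDF (p : ℝ → ℝ) : Prop :=
  Measurable p ∧ (∀ y, 0 ≤ p y) ∧ (∫ y, p y) = 1

/-- `l = ω(ln)`: for every `κ > 0` there is `c > 0` with `l x ≥ κ ln x` for all `x ≥ c`. -/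
def SuperLog (l : ℝ → ℝ) : Prop :=
  ∀ κ : ℝ, 0 < κ → ∃ c : ℝ, 0 < c ∧ ∀ x : ℝ, c ≤ x → κ * Real.log x ≤ l x

open Set
open scoped ENNReal

section TightConvergence

variable {α E : Type*} [MeasurableSpace α] {μ : Measure α} [NormedAddCommGroup E]

theorem integrable_of_norm_le_of_setLIntegral_compl_ne_top {f : α → E} {s : Set α} {C : ℝ}
    (hf : AEStronglyMeasurable f μ) (hμs : μ s ≠ ∞) (hC : ∀ x, ‖f x‖ ≤ C)
    (htail : ∫⁻ x in sᶜ, ‖f x‖ₑ ∂μ ≠ ∞) : Integrable f μ := by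
  rw [← integrableOn_univ, ← union_compl_self s]
  exact (Measure.integrableOn_of_bounded hμs hf (ae_of_all _ hC)).union ⟨hf.restrict, htail.lt_top⟩

theorem norm_setIntegral_le_of_setLIntegral_enorm_le [NormedSpace ℝ E] {f : α → E} {s : Set α}
    {ε : ℝ} (hε : 0 ≤ ε) (hf : ∫⁻ x in s, ‖f x‖ₑ ∂μ ≤ ENNReal.ofReal ε) :
    ‖∫ x in s, f x ∂μ‖ ≤ ε := by
  rw [← ENNReal.ofReal_le_ofReal_iff hε, ofReal_norm]
  exact (enorm_integral_le_lintegral_enorm _).trans hf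

theorem tendsto_integral_of_tendsto_of_norm_le_of_tight [NormedSpace ℝ E] {ι : Type*}
    {l : Filter ι} [l.IsCountablyGenerated] {f : ι → α → E} {g : α → E} {C : ℝ}
    (hf : ∀ᶠ i in l, Integrable (f i) μ) (hg : Integrable g μ) (hC : ∀ᶠ i in l, ∀ x, ‖f i x‖ ≤ C)
    (htight : ∀ ε > 0, ∃ s, MeasurableSet s ∧ μ s ≠ ∞ ∧
      (∀ᶠ i in l, ∫⁻ x in sᶜ, ‖f i x‖ₑ ∂μ ≤ ENNReal.ofReal ε) ∧
      ∫⁻ x in sᶜ, ‖g x‖ₑ ∂μ ≤ ENNReal.ofReal ε)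
    (hlim : ∀ᵐ x ∂μ, Tendsto (fun i => f i x) l (𝓝 (g x))) :
    Tendsto (fun i => ∫ x, f i x ∂μ) l (𝓝 (∫ x, g x ∂μ)) := by
  rw [Metric.tendsto_nhds]
  intro ε hε
  obtain ⟨s, hs, hμs, hf_tail, hg_tail⟩ := htight (ε / 3) (by positivity)
  have hcore : Tendsto (fun i => ∫ x in s, f i x ∂μ) l (𝓝 (∫ x in s, g x ∂μ)) :=
    tendsto_integral_filter_of_dominated_convergence (fun _ => C)
      (hf.mono fun i hi => hi.aestronglyMeasurable.restrict) (hC.mono fun i hi => ae_of_all _ hi)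
      (integrableOn_const hμs) (ae_restrict_of_ae hlim)
  filter_upwards [Metric.tendsto_nhds.1 hcore (ε / 3) (by positivity), hf, hf_tail]
    with i hi hfi hti
  have hf_small := norm_setIntegral_le_of_setLIntegral_enorm_le (by positivity) hti
  have hg_small := norm_setIntegral_le_of_setLIntegral_enorm_le (by positivity) hg_tail
  rw [dist_eq_norm] at hi ⊢
  rw [← integral_add_compl hs hfi, ← integral_add_compl hs hg, add_sub_add_comm]
  calc _ ≤ ‖∫ x in s, f i x ∂μ - ∫ x in s, g x ∂μ‖
        + (‖∫ x in sᶜ, f i x ∂μ‖ + ‖∫ x in sᶜ, g x ∂μ‖) :=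
        (norm_add_le _ _).trans (add_le_add_right (norm_sub_le _ _) _)
    _ < ε := by linarith

end TightConvergence

theorem tendsto_setLIntegral_compl_Icc_atTop {μ : Measure ℝ} {g : ℝ → ℝ≥0∞} (hg : AEMeasurable g μ)
    (hfin : ∫⁻ y, g y ∂μ ≠ ∞) :
    Tendsto (fun R => ∫⁻ y in (Icc (-R) R)ᶜ, g y ∂μ) atTop (𝓝 0) := by
  have hlim : ∀ y, Tendsto (fun R => (Icc (-R) R)ᶜ.indicator g y) atTop (𝓝 0) := fun y =>
    tendsto_const_nhds.congr' <| (eventually_ge_atTop |y|).mono fun R hR =>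
      (indicator_of_notMem (by simpa [abs_le] using hR) _).symm
  simpa only [lintegral_indicator measurableSet_Icc.compl, lintegral_zero] using
    tendsto_lintegral_filter_of_dominated_convergence' g
      (Eventually.of_forall fun R => hg.indicator measurableSet_Icc.compl)
      (Eventually.of_forall fun R => ae_of_all _ (indicator_le_self _ _)) hfin (ae_of_all _ hlim)

section MulLog

theorem mul_log_le_mul_max_log {t M : ℝ} (ht : 0 ≤ t) (htM : t ≤ M) :
    t * log t ≤ t * max (log M) 0 := by
  refine mul_le_mul_of_nonneg_left ?_ ht
  rcases ht.eq_or_lt with rfl | ht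
  · simp
  · exact (log_le_log ht htM).trans (le_max_left _ _)

theorem abs_mul_log_le_of_le {t M : ℝ} (ht : 0 ≤ t) (htM : t ≤ M) :
    |t * log t| ≤ M * max (log M) 0 + 1 := by
  have hup := mul_log_le_mul_max_log ht htM
  have hdown := self_sub_one_le_mul_log ht
  have hK : 0 ≤ max (log M) 0 := le_max_right _ _
  rw [abs_le]
  constructor <;> nlinarith

theorem neg_mul_log_le_two_sqrt {t : ℝ} (ht : 0 ≤ t) : -(t * log t) ≤ 2 * √t := by
  have hs := sqrt_nonneg t
  calc -(t * log t) = 2 * √t * -(√t * log √t) := by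
        rw [log_sqrt ht]; nth_rewrite 1 [← mul_self_sqrt ht]; ring
    _ ≤ 2 * √t * (1 - √t) :=
        mul_le_mul_of_nonneg_left (by linarith [self_sub_one_le_mul_log hs]) (by positivity)
    _ ≤ 2 * √t := by nlinarith

theorem neg_mul_log_le_of_mul_log_le {t x κ b : ℝ} (ht : 0 ≤ t) (hx : x ≠ 0) (hκ : 0 < κ)
    (hb : 0 ≤ b) (hxb : κ * log x ≤ b) :
    -(t * log t) ≤ 4 / κ * b * t + 2 * (x ^ 2)⁻¹ := by
  have hbt : 0 ≤ 4 / κ * b * t := by positivity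
  by_cases hsmall : t ≤ ((x ^ 2)⁻¹) ^ 2
  · have hsqrt : √t ≤ (x ^ 2)⁻¹ := (sqrt_le_sqrt hsmall).trans_eq (sqrt_sq (by positivity))
    linarith [neg_mul_log_le_two_sqrt ht]
  · push Not at hsmall
    have hlog : -log t ≤ 4 / κ * b :=
      calc -log t ≤ -log (((x ^ 2)⁻¹) ^ 2) := neg_le_neg (log_le_log (by positivity) hsmall.le)
        _ = 4 * log x := by rw [log_pow, log_inv, log_pow]; push_cast; ring
        _ ≤ 4 / κ * b := by rw [div_mul_eq_mul_div, le_div_iff₀ hκ]; linarith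
    nlinarith [mul_le_mul_of_nonneg_left hlog ht, inv_nonneg.2 (sq_nonneg x)]

theorem abs_mul_log_le_of_one_le_log {t M x κ b : ℝ} (ht : 0 ≤ t) (htM : t ≤ M) (hκ : 0 < κ)
    (hx : 1 ≤ log x) (hxb : κ * log x ≤ b) :
    |t * log t| ≤ (max (log M) 0 + 4) / κ * (b * t) + 4 * (1 + x ^ 2)⁻¹ := by
  have hκb : κ ≤ b := by nlinarith
  have hb : 0 ≤ b := hκ.le.trans hκb
  have hx1 : 1 < |x| := (log_pos_iff (abs_nonneg x)).1 (by rw [log_abs]; linarith)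
  have hx0 : x ≠ 0 := abs_pos.1 (by linarith)
  have hx2 : 1 ≤ x ^ 2 := by nlinarith [sq_abs x]
  have hK : 0 ≤ max (log M) 0 := le_max_right _ _
  have hup : t * log t ≤ max (log M) 0 / κ * (b * t) :=
    calc t * log t ≤ t * max (log M) 0 := mul_log_le_mul_max_log ht htM
      _ ≤ max (log M) 0 / κ * (b * t) := by
        rw [div_mul_eq_mul_div, le_div_iff₀ hκ]
        nlinarith [mul_nonneg (mul_nonneg hK ht) (sub_nonneg.2 hκb)]
  have hdown := neg_mul_log_le_of_mul_log_le ht hx0 hκ hb hxb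
  have hinv : 2 * (x ^ 2)⁻¹ ≤ 4 * (1 + x ^ 2)⁻¹ := by
    rw [← div_eq_mul_inv, ← div_eq_mul_inv, div_le_div_iff₀ (by positivity) (by positivity)]
    linarith
  have hsplit : (max (log M) 0 + 4) / κ * (b * t) =
      max (log M) 0 / κ * (b * t) + 4 / κ * b * t := by ring
  have hKbt : 0 ≤ max (log M) 0 / κ * (b * t) := mul_nonneg (div_nonneg hK hκ.le) (mul_nonneg hb ht)
  have h4bt : 0 ≤ 4 / κ * b * t := mul_nonneg (mul_nonneg (div_nonneg zero_le_four hκ.le) hb) ht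
  have hinv0 : 0 ≤ 4 * (1 + x ^ 2)⁻¹ := by positivity
  rw [abs_le]
  constructor <;> linarith

end MulLog

section Tails

variable {l q : ℝ → ℝ} {M L : ℝ}

theorem setLIntegral_compl_Icc_enorm_mul_log_le (hq0 : ∀ y, 0 ≤ q y) (hqM : ∀ y, q y ≤ M)
    (hmom : ∫⁻ y, ENNReal.ofReal (l |y| * q y) ≤ ENNReal.ofReal L) {κ R : ℝ} (hκ : 0 < κ)
    (hR : exp 1 ≤ R) (hlR : ∀ x, R ≤ x → κ * log x ≤ l x) :
    ∫⁻ y in (Icc (-R) R)ᶜ, ‖q y * log (q y)‖ₑ ≤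
      ENNReal.ofReal ((max (log M) 0 + 4) / κ * L) +
        4 * ∫⁻ y in (Icc (-R) R)ᶜ, ENNReal.ofReal (1 + y ^ 2)⁻¹ := by
  set a := (max (log M) 0 + 4) / κ
  have ha : 0 ≤ a := by positivity
  have hpt : ∀ y ∈ (Icc (-R) R)ᶜ, ‖q y * log (q y)‖ₑ ≤
      ENNReal.ofReal a * ENNReal.ofReal (l |y| * q y) + 4 * ENNReal.ofReal (1 + y ^ 2)⁻¹ := by
    intro y hy
    have hRy : R ≤ |y| := by
      simp only [mem_compl_iff, mem_Icc, ← abs_le, not_le] at hy; exact hy.le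
    have hlog : 1 ≤ log |y| := (le_log_iff_exp_le ((exp_pos 1).trans_le (hR.trans hRy))).2
      (hR.trans hRy)
    have h := abs_mul_log_le_of_one_le_log (hq0 y) (hqM y) hκ hlog (hlR _ hRy)
    rw [sq_abs] at h
    calc ‖q y * log (q y)‖ₑ = ENNReal.ofReal |q y * log (q y)| := Real.enorm_eq_ofReal_abs _
      _ ≤ ENNReal.ofReal (a * (l |y| * q y) + 4 * (1 + y ^ 2)⁻¹) := ENNReal.ofReal_le_ofReal h
      _ ≤ ENNReal.ofReal (a * (l |y| * q y)) + ENNReal.ofReal (4 * (1 + y ^ 2)⁻¹) :=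
        ENNReal.ofReal_add_le
      _ = _ := by
        rw [ENNReal.ofReal_mul (p := a) ha, ENNReal.ofReal_mul (p := 4) (by norm_num),
          ENNReal.ofReal_ofNat]
  calc _ ≤ ∫⁻ y in (Icc (-R) R)ᶜ,
        ENNReal.ofReal a * ENNReal.ofReal (l |y| * q y) + 4 * ENNReal.ofReal (1 + y ^ 2)⁻¹ :=
        setLIntegral_mono' measurableSet_Icc.compl hpt
    _ = ENNReal.ofReal a * (∫⁻ y in (Icc (-R) R)ᶜ, ENNReal.ofReal (l |y| * q y)) +
        4 * ∫⁻ y in (Icc (-R) R)ᶜ, ENNReal.ofReal (1 + y ^ 2)⁻¹ := by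
      rw [lintegral_add_right _ (by fun_prop), lintegral_const_mul' _ _ ENNReal.ofReal_ne_top,
        lintegral_const_mul' _ _ (by norm_num)]
    _ ≤ ENNReal.ofReal a * ENNReal.ofReal L +
        4 * ∫⁻ y in (Icc (-R) R)ᶜ, ENNReal.ofReal (1 + y ^ 2)⁻¹ := by
      gcongr
      exact (setLIntegral_le_lintegral _ _).trans hmom
    _ = _ := by rw [ENNReal.ofReal_mul ha]

theorem exists_forall_setLIntegral_compl_Icc_enorm_mul_log_le (hl : SuperLog l) (M L : ℝ) {ε : ℝ}
    (hε : 0 < ε) :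
    ∃ R, ∀ q : ℝ → ℝ, (∀ y, 0 ≤ q y) → (∀ y, q y ≤ M) →
      ∫⁻ y, ENNReal.ofReal (l |y| * q y) ≤ ENNReal.ofReal L →
      ∫⁻ y in (Icc (-R) R)ᶜ, ‖q y * log (q y)‖ₑ ≤ ENNReal.ofReal ε := by
  have hκ_lim : Tendsto (fun κ => (max (log M) 0 + 4) / κ * L) atTop (𝓝 0) := by
    simpa using (tendsto_const_nhds.div_atTop tendsto_id).mul_const L
  obtain ⟨κ, hκε, hκ⟩ :=
    ((hκ_lim.eventually (gt_mem_nhds (half_pos hε))).and (eventually_gt_atTop 0)).exists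
  obtain ⟨c, -, hc⟩ := hl κ hκ
  have hg_lim : Tendsto (fun R => 4 * ∫⁻ y in (Icc (-R) R)ᶜ, ENNReal.ofReal (1 + y ^ 2)⁻¹)
      atTop (𝓝 0) := by
    simpa using ENNReal.Tendsto.const_mul (tendsto_setLIntegral_compl_Icc_atTop (by fun_prop)
      integrable_inv_one_add_sq.lintegral_lt_top.ne) (Or.inr ENNReal.ofNat_ne_top)
  obtain ⟨R, hRc, hRe, hRg⟩ := ((eventually_ge_atTop c).and ((eventually_ge_atTop (exp 1)).and
    (hg_lim.eventually (gt_mem_nhds (ENNReal.ofReal_pos.2 (half_pos hε)))))).exists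
  refine ⟨R, fun q hq0 hqM hmom => ?_⟩
  calc _ ≤ _ := setLIntegral_compl_Icc_enorm_mul_log_le hq0 hqM hmom hκ hRe
        fun x hx => hc x (hRc.trans hx)
    _ ≤ ENNReal.ofReal (ε / 2) + ENNReal.ofReal (ε / 2) :=
        add_le_add (ENNReal.ofReal_le_ofReal hκε.le) hRg.le
    _ = ENNReal.ofReal ε := by rw [← ENNReal.ofReal_add (by positivity) (by positivity), add_halves]

theorem integrable_mul_log_of_lintegral_le (hl : SuperLog l) (hq : Measurable q)
    (hq0 : ∀ y, 0 ≤ q y) (hqM : ∀ y, q y ≤ M)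
    (hmom : ∫⁻ y, ENNReal.ofReal (l |y| * q y) ≤ ENNReal.ofReal L) :
    Integrable fun y => q y * log (q y) := by
  obtain ⟨R, hR⟩ := exists_forall_setLIntegral_compl_Icc_enorm_mul_log_le hl M L one_pos
  exact integrable_of_norm_le_of_setLIntegral_compl_ne_top
    (hq.mul (measurable_log.comp hq)).aestronglyMeasurable measure_Icc_lt_top.ne
    (fun y => abs_mul_log_le_of_le (hq0 y) (hqM y))
    (ne_top_of_le_ne_top ENNReal.ofReal_ne_top (hR q hq0 hqM hmom))

end Tails

theorem entropy_convergence_of_pointwise_general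
    (p : ℝ → ℝ) (pm : ℕ → ℝ → ℝ)
    (hp : IsPDF p) (hpm : ∀ m : ℕ, 1 ≤ m → IsPDF (pm m))
    (M : ℝ)
    (hbp : ∀ y : ℝ, p y ≤ M) (hbpm : ∀ m : ℕ, 1 ≤ m → ∀ y : ℝ, pm m y ≤ M)
    (l : ℝ → ℝ) (hl_super : SuperLog l)
    (L : ℝ)
    (hmom : ∫⁻ y, ENNReal.ofReal (l |y| * p y) ≤ ENNReal.ofReal L)
    (hmomm : ∀ m : ℕ, 1 ≤ m → ∫⁻ y, ENNReal.ofReal (l |y| * pm m y) ≤ ENNReal.ofReal L)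
    (hconv : ∀ y : ℝ, Tendsto (fun m => pm m y) atTop (𝓝 (p y))) :
    Tendsto (fun m => diffEntropy (pm m)) atTop (𝓝 (diffEntropy p)) := by
  refine (tendsto_integral_of_tendsto_of_norm_le_of_tight (C := M * max (log M) 0 + 1)
    ?_ ?_ ?_ ?_ ?_).neg
  · exact (eventually_ge_atTop 1).mono fun m hm => integrable_mul_log_of_lintegral_le hl_super
      (hpm m hm).1 (hpm m hm).2.1 (hbpm m hm) (hmomm m hm)
  · exact integrable_mul_log_of_lintegral_le hl_super hp.1 hp.2.1 hbp hmom
  · exact (eventually_ge_atTop 1).mono fun m hm y =>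
      abs_mul_log_le_of_le ((hpm m hm).2.1 y) (hbpm m hm y)
  · intro ε hε
    obtain ⟨R, hR⟩ := exists_forall_setLIntegral_compl_Icc_enorm_mul_log_le hl_super M L hε
    exact ⟨Icc (-R) R, measurableSet_Icc, measure_Icc_lt_top.ne,
      (eventually_ge_atTop 1).mono fun m hm => hR _ (hpm m hm).2.1 (hbpm m hm) (hmomm m hm),
      hR p hp.2.1 hbp hmom⟩
  · exact ae_of_all _ fun y => (continuous_mul_log.tendsto _).comp (hconv y)

/-- If the densities `p_m, p` are uniformly bounded (C1) and have a
uniformly bounded super-logarithmic moment (C2), then pointwise convergence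
`p_m → p` implies convergence of the differential entropies `h(p_m) → h(p)`. -/
theorem entropy_convergence_of_pointwise
    (p : ℝ → ℝ) (pm : ℕ → ℝ → ℝ)
    (hp : IsPDF p) (hpm : ∀ m : ℕ, 1 ≤ m → IsPDF (pm m))
    (M : ℝ) (hM : 0 < M)
    (hbp : ∀ y : ℝ, p y ≤ M) (hbpm : ∀ m : ℕ, 1 ≤ m → ∀ y : ℝ, pm m y ≤ M)
    (l : ℝ → ℝ) (hl_nonneg : ∀ x : ℝ, 0 ≤ x → 0 ≤ l x)
    (hl_mono : MonotoneOn l (Set.Ici 0)) (hl_super : SuperLog l)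
    (L : ℝ) (hL : 0 < L)
    (hmom : ∫⁻ y, ENNReal.ofReal (l |y| * p y) ≤ ENNReal.ofReal L)
    (hmomm : ∀ m : ℕ, 1 ≤ m → ∫⁻ y, ENNReal.ofReal (l |y| * pm m y) ≤ ENNReal.ofReal L)
    (hconv : ∀ y : ℝ, Tendsto (fun m => pm m y) atTop (𝓝 (p y))) :
    Tendsto (fun m => diffEntropy (pm m)) atTop (𝓝 (diffEntropy p)) :=
  entropy_convergence_of_pointwise_general p pm hp hpm M hbp hbpm l hl_super L hmom hmomm hconv
end

section
/- Let p be a probability density function on ℝ with p(y) ≤ 1 for all y, let l : [0,∞) → [0,∞) be non-negative and non-decreasing with ∫ l(|y|) p(y) dy ≤ L for some finite L > 0, and let ỹ > 0 satisfy l(ỹ) > 0. Then the tail entropy integral satisfies −∫_{|y| ≥ ỹ} p(y) ln p(y) dy ≤ (L ln π)/l(ỹ) + 2L · sup_{|y| ≥ ỹ} [ ln(1+|y|) / l(|y|) ] + (1/e) · (ln 4)/ln(1+ỹ²). -/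
open MeasureTheory Real Filter Topology

/-!
Compare `p` with the Cauchy density `q(y) = 1 / (π (1 + y²))`: for `a ≥ 0` and `q > 0`,
`-a log a ≤ -a log q + q / e`, and `-a log q = a log π + a log (1 + y²)` with
`log (1 + y²) ≤ 2 log (1 + |y|)`. Integrating over the tail `|y| ≥ ỹ`, the `a log π` term is
controlled by Markov's inequality `∫_{|y| ≥ ỹ} p ≤ L / l(ỹ)`, the `log (1 + |y|)` term by
`log (1 + |y|) p = (log (1 + |y|) / l(|y|)) · l(|y|) p`, and the `q / e` term, after multiplying
by `log (1 + y²) / log (1 + ỹ²) ≥ 1`, by `∫ q(y) log (1 + y²) dy = log 4`. This last identity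
follows from Fubini and `log (1 + y²) = ∫₀¹ 2uy² / (1 + u²y²) du`, since by partial fractions
`∫ 2uy² / ((1 + u²y²)(1 + y²)) dy = 2π / (1 + u)`.
-/

theorem neg_mul_log_le_neg_mul_log_add (a : ℝ) {q : ℝ} (ha : 0 ≤ a) (hq : 0 < q) :
    -(a * log a) ≤ -(a * log q) + q / exp 1 := by
  rcases ha.eq_or_lt with rfl | ha
  · simp; positivity
  have h := exp_one_mul_le_exp (x := log (q / a))
  rw [exp_log (div_pos hq ha), log_div hq.ne' ha.ne', le_div_iff₀ ha] at h
  have : a * (log q - log a) ≤ q / exp 1 := by rw [le_div_iff₀ (exp_pos 1)]; linarith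
  linarith

theorem log_one_add_sq_le (y : ℝ) : log (1 + y ^ 2) ≤ 2 * log (1 + |y|) := by
  rw [show 2 * log (1 + |y|) = log ((1 + |y|) ^ 2) by rw [log_pow]; norm_num]
  exact log_le_log (by positivity) (by nlinarith [sq_abs y, abs_nonneg y])

theorem neg_mul_log_le_of_le_abs {a y ytil : ℝ} (ha : 0 ≤ a) (hytil : 0 < ytil)
    (hy : ytil ≤ |y|) :
    -(a * log a) ≤ log π * a + 2 * (log (1 + |y|) * a)
      + (exp 1 * π * log (1 + ytil ^ 2))⁻¹ * (log (1 + y ^ 2) / (1 + y ^ 2)) := by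
  have hY : 0 < 1 + y ^ 2 := by positivity
  have hD : 0 < log (1 + ytil ^ 2) := log_pos (by nlinarith)
  have hDY : log (1 + ytil ^ 2) ≤ log (1 + y ^ 2) :=
    log_le_log (by positivity) (by nlinarith [sq_abs y])
  have hgibbs := neg_mul_log_le_neg_mul_log_add a ha (inv_pos.2 (mul_pos pi_pos hY))
  rw [log_inv, log_mul pi_pos.ne' hY.ne'] at hgibbs
  have hcauchy : (π * (1 + y ^ 2))⁻¹ / exp 1
      ≤ (exp 1 * π * log (1 + ytil ^ 2))⁻¹ * (log (1 + y ^ 2) / (1 + y ^ 2)) :=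
    calc (π * (1 + y ^ 2))⁻¹ / exp 1
        = (exp 1 * π * log (1 + ytil ^ 2))⁻¹ * (log (1 + ytil ^ 2) / (1 + y ^ 2)) := by
          field_simp
      _ ≤ _ := by gcongr
  nlinarith [mul_le_mul_of_nonneg_left (log_one_add_sq_le y) ha]

theorem log_one_add_sq_eq_integral (y : ℝ) :
    log (1 + y ^ 2) = ∫ u in (0:ℝ)..1, 2 * u * y ^ 2 / (1 + (u * y) ^ 2) := by
  have hderiv : ∀ u ∈ Set.uIcc (0:ℝ) 1,
      HasDerivAt (fun u => log (1 + (u * y) ^ 2)) (2 * u * y ^ 2 / (1 + (u * y) ^ 2)) u := by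
    intro u _
    have hinner : HasDerivAt (fun u => 1 + (u * y) ^ 2) (2 * u * y ^ 2) u := by
      refine (((hasDerivAt_mul_const y).fun_pow 2).const_add 1).congr_deriv ?_
      ring
    exact hinner.log (by positivity)
  have hcont : Continuous fun u : ℝ => 2 * u * y ^ 2 / (1 + (u * y) ^ 2) := by
    fun_prop (disch := exact fun _ => by positivity)
  rw [intervalIntegral.integral_eq_sub_of_hasDerivAt hderiv (hcont.intervalIntegrable 0 1)]
  simp

theorem integral_inv_one_add_mul_sq {u : ℝ} (hu : 0 < u) :
    ∫ y, (1 + (u * y) ^ 2)⁻¹ = π / u := by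
  rw [Measure.integral_comp_mul_left (fun y => (1 + y ^ 2)⁻¹), integral_univ_inv_one_add_sq,
    abs_of_pos (inv_pos.2 hu), smul_eq_mul, inv_mul_eq_div]

theorem lintegral_mul_sq_div_one_add_sq_mul_one_add_sq {u : ℝ} (hu0 : 0 < u) (hu1 : u ≠ 1) :
    ∫⁻ y, ENNReal.ofReal (2 * u * y ^ 2 / ((1 + (u * y) ^ 2) * (1 + y ^ 2)))
      = ENNReal.ofReal (2 * π / (1 + u)) := by
  have hsq : 1 - u ^ 2 ≠ 0 := fun h =>
    mul_ne_zero (sub_ne_zero.2 hu1.symm) (by positivity : 1 + u ≠ 0) (by linear_combination h)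
  have hpartial : ∀ y : ℝ, 2 * u * y ^ 2 / ((1 + (u * y) ^ 2) * (1 + y ^ 2))
      = 2 * u / (1 - u ^ 2) * ((1 + (u * y) ^ 2)⁻¹ - (1 + y ^ 2)⁻¹) := by
    intro y
    field_simp
    ring
  have hint : Integrable fun y : ℝ => (1 + (u * y) ^ 2)⁻¹ :=
    integrable_inv_one_add_sq.comp_mul_left' hu0.ne'
  have hint' : Integrable fun y : ℝ =>
      2 * u / (1 - u ^ 2) * ((1 + (u * y) ^ 2)⁻¹ - (1 + y ^ 2)⁻¹) :=
    (hint.sub integrable_inv_one_add_sq).const_mul _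
  simp_rw [hpartial]
  rw [← ofReal_integral_eq_lintegral_ofReal hint'
    (Eventually.of_forall fun y => by simp only [Pi.zero_apply, ← hpartial]; positivity),
    integral_const_mul, integral_sub hint integrable_inv_one_add_sq,
    integral_inv_one_add_mul_sq hu0, integral_univ_inv_one_add_sq]
  congr 1
  field_simp
  ring

theorem lintegral_log_one_add_sq_div_one_add_sq :
    ∫⁻ y, ENNReal.ofReal (log (1 + y ^ 2) / (1 + y ^ 2)) = ENNReal.ofReal (π * log 4) := by
  have hrepr : ∀ y : ℝ, ENNReal.ofReal (log (1 + y ^ 2) / (1 + y ^ 2))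
      = ∫⁻ u in Set.Ioo 0 1,
          ENNReal.ofReal (2 * u * y ^ 2 / ((1 + (u * y) ^ 2) * (1 + y ^ 2))) := by
    intro y
    have hcont : Continuous fun u : ℝ => 2 * u * y ^ 2 / ((1 + (u * y) ^ 2) * (1 + y ^ 2)) := by
      fun_prop (disch := exact fun _ => by positivity)
    rw [log_one_add_sq_eq_integral, ← intervalIntegral.integral_div,
      intervalIntegral.integral_of_le zero_le_one, integral_Ioc_eq_integral_Ioo,
      ← ofReal_integral_eq_lintegral_ofReal]
    · simp_rw [div_div]
    · exact hcont.integrableOn_Icc.mono_set Set.Ioo_subset_Icc_self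
    · exact ae_restrict_of_forall_mem measurableSet_Ioo fun u hu => by
        have := hu.1.le; positivity
  have hmeas : AEMeasurable (Function.uncurry fun (y u : ℝ) =>
      ENNReal.ofReal (2 * u * y ^ 2 / ((1 + (u * y) ^ 2) * (1 + y ^ 2))))
      (volume.prod (volume.restrict (Set.Ioo 0 1))) := by
    refine (ENNReal.continuous_ofReal.comp ?_).aemeasurable
    fun_prop (disch := exact fun _ => by positivity)
  have hlog : ∫ u in (0:ℝ)..1, 2 * π / (1 + u) = π * log 4 := by
    have h4 : log 4 = 2 * log 2 := by
      rw [show (4:ℝ) = 2 ^ 2 by norm_num, log_pow]; norm_num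
    simp only [div_eq_mul_inv, intervalIntegral.integral_const_mul,
      intervalIntegral.integral_comp_add_left (fun x => x⁻¹)]
    rw [integral_inv (by norm_num [Set.uIcc]), h4]
    norm_num; ring
  simp_rw [hrepr]
  rw [lintegral_lintegral_swap hmeas, setLIntegral_congr_fun measurableSet_Ioo
    fun u hu => lintegral_mul_sq_div_one_add_sq_mul_one_add_sq hu.1 hu.2.ne,
    ← hlog, intervalIntegral.integral_of_le zero_le_one, integral_Ioc_eq_integral_Ioo,
    ofReal_integral_eq_lintegral_ofReal]
  · exact (ContinuousOn.integrableOn_Icc (continuousOn_const.div (by fun_prop)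
      fun u hu => by linarith [hu.1])).mono_set Set.Ioo_subset_Icc_self
  · exact ae_restrict_of_forall_mem measurableSet_Ioo fun u hu => by
        have := hu.1.le; positivity

theorem measurableSet_le_abs (c : ℝ) : MeasurableSet {y : ℝ | c ≤ |y|} :=
  measurableSet_le measurable_const measurable_abs

theorem setLIntegral_abs_ge_neg_mul_log_le {p : ℝ → ℝ} {ytil : ℝ} (hp_meas : Measurable p)
    (hp : ∀ y, 0 ≤ p y) (hytil : 0 < ytil) :
    ∫⁻ y in {y | ytil ≤ |y|}, ENNReal.ofReal (-(p y * log (p y)))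
      ≤ ENNReal.ofReal (log π) * (∫⁻ y in {y | ytil ≤ |y|}, ENNReal.ofReal (p y))
        + 2 * (∫⁻ y in {y | ytil ≤ |y|}, ENNReal.ofReal (log (1 + |y|) * p y))
        + ENNReal.ofReal (exp 1 * π * log (1 + ytil ^ 2))⁻¹
          * ∫⁻ y, ENNReal.ofReal (log (1 + y ^ 2) / (1 + y ^ 2)) := by
  set T := {y : ℝ | ytil ≤ |y|}
  set c := (exp 1 * π * log (1 + ytil ^ 2))⁻¹
  have hc : 0 ≤ c :=
    inv_nonneg.2 (mul_pos (mul_pos (exp_pos 1) pi_pos) (log_pos (by nlinarith))).le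
  have hlogπ : 0 ≤ log π := log_nonneg (by linarith [pi_gt_three])
  have hpointwise : ∀ y ∈ T, ENNReal.ofReal (-(p y * log (p y)))
      ≤ ENNReal.ofReal (log π) * ENNReal.ofReal (p y) + 2 * ENNReal.ofReal (log (1 + |y|) * p y)
        + ENNReal.ofReal c * ENNReal.ofReal (log (1 + y ^ 2) / (1 + y ^ 2)) := by
    intro y hy
    rw [← ENNReal.ofReal_mul hlogπ, ← ENNReal.ofReal_ofNat 2,
      ← ENNReal.ofReal_mul zero_le_two, ← ENNReal.ofReal_mul hc]
    refine (ENNReal.ofReal_le_ofReal (neg_mul_log_le_of_le_abs (hp y) hytil hy)).trans ?_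
    exact ENNReal.ofReal_add_le.trans (by gcongr; exact ENNReal.ofReal_add_le)
  calc _ ≤ ∫⁻ y in T, (ENNReal.ofReal (log π) * ENNReal.ofReal (p y)
          + 2 * ENNReal.ofReal (log (1 + |y|) * p y)
          + ENNReal.ofReal c * ENNReal.ofReal (log (1 + y ^ 2) / (1 + y ^ 2))) :=
        setLIntegral_mono' (measurableSet_le_abs ytil) hpointwise
    _ = ENNReal.ofReal (log π) * (∫⁻ y in T, ENNReal.ofReal (p y))
          + 2 * (∫⁻ y in T, ENNReal.ofReal (log (1 + |y|) * p y))
          + ENNReal.ofReal c * ∫⁻ y in T, ENNReal.ofReal (log (1 + y ^ 2) / (1 + y ^ 2)) := by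
        rw [lintegral_add_right _ (by fun_prop), lintegral_add_right _ (by fun_prop),
          lintegral_const_mul' _ _ ENNReal.ofReal_ne_top, lintegral_const_mul' _ _ (by norm_num),
          lintegral_const_mul' _ _ ENNReal.ofReal_ne_top]
    _ ≤ _ := by gcongr; exact Measure.restrict_le_self

theorem setLIntegral_ofReal_mul_le_mul_iSup {α : Type*} [MeasurableSpace α] {μ : Measure α}
    {s : Set α} {f g w : α → ℝ} {L : ℝ} (hs : MeasurableSet s) (hf : ∀ x ∈ s, 0 ≤ f x)
    (hw : ∀ x ∈ s, 0 < w x) (hL : 0 < L)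
    (hmom : ∫⁻ x in s, ENNReal.ofReal (w x * f x) ∂μ ≤ ENNReal.ofReal L) :
    ∫⁻ x in s, ENNReal.ofReal (g x * f x) ∂μ
      ≤ ENNReal.ofReal L * ⨆ x : s, ENNReal.ofReal (g x / w x) := by
  set S := ⨆ x : s, ENNReal.ofReal (g x / w x)
  rcases eq_or_ne S ⊤ with hS | hS
  · simp [hS, ENNReal.mul_top, hL]
  have hpointwise : ∀ x ∈ s, ENNReal.ofReal (g x * f x) ≤ S * ENNReal.ofReal (w x * f x) := by
    intro x hx
    calc ENNReal.ofReal (g x * f x)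
        = ENNReal.ofReal (g x / w x) * ENNReal.ofReal (w x * f x) := by
          have := (hw x hx).ne'
          rw [← ENNReal.ofReal_mul' (mul_nonneg (hw x hx).le (hf x hx))]
          field_simp
      _ ≤ S * ENNReal.ofReal (w x * f x) := by
          gcongr
          exact le_iSup (fun x : s => ENNReal.ofReal (g x / w x)) ⟨x, hx⟩
  calc ∫⁻ x in s, ENNReal.ofReal (g x * f x) ∂μ
      ≤ ∫⁻ x in s, S * ENNReal.ofReal (w x * f x) ∂μ := setLIntegral_mono' hs hpointwise
    _ = S * ∫⁻ x in s, ENNReal.ofReal (w x * f x) ∂μ := lintegral_const_mul' _ _ hS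
    _ ≤ ENNReal.ofReal L * S := by rw [mul_comm]; gcongr

theorem setLIntegral_abs_ge_le_div {f l : ℝ → ℝ} {L ytil : ℝ} (hf : ∀ y, 0 ≤ f y)
    (hl_mono : MonotoneOn l (Set.Ici 0)) (hytil : 0 ≤ ytil) (hlytil : 0 < l ytil) (hL : 0 < L)
    (hmom : ∫⁻ y in {y | ytil ≤ |y|}, ENNReal.ofReal (l |y| * f y) ≤ ENNReal.ofReal L) :
    ∫⁻ y in {y | ytil ≤ |y|}, ENNReal.ofReal (f y) ≤ ENNReal.ofReal (L / l ytil) := by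
  have hl : ∀ y ∈ {y : ℝ | ytil ≤ |y|}, l ytil ≤ l |y| :=
    fun y hy => hl_mono hytil (abs_nonneg y) hy
  have hbound := setLIntegral_ofReal_mul_le_mul_iSup (g := fun _ => 1)
    (measurableSet_le_abs ytil) (fun y _ => hf y)
    (fun y hy => hlytil.trans_le (hl y hy)) hL hmom
  simp only [one_mul] at hbound
  refine hbound.trans ?_
  rw [div_eq_mul_one_div, ENNReal.ofReal_mul hL.le]
  gcongr
  exact iSup_le fun y => ENNReal.ofReal_le_ofReal (one_div_le_one_div_of_le hlytil (hl y y.2))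

theorem tail_entropy_bound_general
    (p : ℝ → ℝ) (hp : IsPDF p)
    (l : ℝ → ℝ)
    (hl_mono : MonotoneOn l (Set.Ici 0))
    (L : ℝ) (hL : 0 < L)
    (hmom : ∫⁻ y, ENNReal.ofReal (l |y| * p y) ≤ ENNReal.ofReal L)
    (ytil : ℝ) (hytil : 0 < ytil) (hlytil : 0 < l ytil) :
    ∫⁻ y in {y : ℝ | ytil ≤ |y|}, ENNReal.ofReal (-(p y * Real.log (p y)))
      ≤ ENNReal.ofReal (L * Real.log π / l ytil)
        + 2 * ENNReal.ofReal L *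
            (⨆ y : {y : ℝ // ytil ≤ |y|}, ENNReal.ofReal (Real.log (1 + |y.1|) / l |y.1|))
        + ENNReal.ofReal ((1 / Real.exp 1) * (Real.log 4 / Real.log (1 + ytil ^ 2))) := by
  have hmomT := (setLIntegral_le_lintegral {y : ℝ | ytil ≤ |y|} _).trans hmom
  have hlT : ∀ y ∈ {y : ℝ | ytil ≤ |y|}, 0 < l |y| :=
    fun y hy => hlytil.trans_le (hl_mono hytil.le (abs_nonneg y) hy)
  have hD : 0 < log (1 + ytil ^ 2) := log_pos (by nlinarith)
  refine (setLIntegral_abs_ge_neg_mul_log_le hp.1 hp.2.1 hytil).trans ?_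
  rw [lintegral_log_one_add_sq_div_one_add_sq]
  calc _ ≤ ENNReal.ofReal (log π) * ENNReal.ofReal (L / l ytil)
          + 2 * (ENNReal.ofReal L *
            ⨆ y : {y : ℝ // ytil ≤ |y|}, ENNReal.ofReal (log (1 + |y.1|) / l |y.1|))
          + ENNReal.ofReal (exp 1 * π * log (1 + ytil ^ 2))⁻¹
            * ENNReal.ofReal (π * log 4) := by
        gcongr
        · exact setLIntegral_abs_ge_le_div hp.2.1 hl_mono hytil.le hlytil hL hmomT
        · exact setLIntegral_ofReal_mul_le_mul_iSup (measurableSet_le_abs ytil)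
            (fun y _ => hp.2.1 y) hlT hL hmomT
    _ = _ := by
        rw [← ENNReal.ofReal_mul (log_nonneg (by linarith [pi_gt_three])),
          ← ENNReal.ofReal_mul (by positivity), ← mul_assoc,
          show log π * (L / l ytil) = L * log π / l ytil by ring,
          show (exp 1 * π * log (1 + ytil ^ 2))⁻¹ * (π * log 4)
            = 1 / exp 1 * (log 4 / log (1 + ytil ^ 2)) by field_simp]

/-- Tail-entropy bound: if `p ≤ 1` is a density with
`∫ l(|y|) p(y) dy ≤ L` for a non-negative non-decreasing `l`, and `l(ỹ) > 0`, then
`-∫_{|y| ≥ ỹ} p ln p ≤ L ln π / l(ỹ) + 2 L sup_{|y| ≥ ỹ} (ln(1+|y|)/l(|y|))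
  + (1/e)·ln 4 / ln(1+ỹ²)`
(the supremum is taken in `ℝ≥0∞`, as it may be infinite). -/
theorem tail_entropy_bound
    (p : ℝ → ℝ) (hp : IsPDF p) (hp1 : ∀ y : ℝ, p y ≤ 1)
    (l : ℝ → ℝ) (hl_nonneg : ∀ x : ℝ, 0 ≤ x → 0 ≤ l x)
    (hl_mono : MonotoneOn l (Set.Ici 0))
    (L : ℝ) (hL : 0 < L)
    (hmom : ∫⁻ y, ENNReal.ofReal (l |y| * p y) ≤ ENNReal.ofReal L)
    (ytil : ℝ) (hytil : 0 < ytil) (hlytil : 0 < l ytil) :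
    ∫⁻ y in {y : ℝ | ytil ≤ |y|}, ENNReal.ofReal (-(p y * Real.log (p y)))
      ≤ ENNReal.ofReal (L * Real.log π / l ytil)
        + 2 * ENNReal.ofReal L *
            (⨆ y : {y : ℝ // ytil ≤ |y|}, ENNReal.ofReal (Real.log (1 + |y.1|) / l |y.1|))
        + ENNReal.ofReal ((1 / Real.exp 1) * (Real.log 4 / Real.log (1 + ytil ^ 2))) :=
  tail_entropy_bound_general p hp l hl_mono L hL hmom ytil hytil hlytil
end

section
/- For m ≥ 3 define the probability density p_m on ℝ by p_m(x) = 1 − 1/ln m for x ∈ [0,1], p_m(x) = (1/(ln m)²)·(1/x) for x ∈ (1, m], and p_m(x) = 0 otherwise; let p be the uniform density on [0,1]. Then p_m(x) → p(x) pointwise for every x ∈ (0,1) ∪ (1,∞), every p_m and p is bounded by 1, h(p) = 0, and h(p_m) = −(1 − 1/ln m) ln(1 − 1/ln m) + 2 ln(ln m)/ln m + 1/2, so that h(p_m) → 1/2 ≠ h(p) as m → ∞; in particular the differential entropies do not converge to the entropy of the pointwise limit. -/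
open MeasureTheory Real Filter Topology

/-- The density `p_m` of the counterexample: `1 - 1/ln m` on `[0,1]`,
`(1/(ln m)²)·(1/x)` on `(1,m]`, and `0` elsewhere. -/
noncomputable def pmEx (m : ℕ) (x : ℝ) : ℝ :=
  if 0 ≤ x ∧ x ≤ 1 then 1 - 1 / Real.log m
  else if 1 < x ∧ x ≤ (m : ℝ) then (1 / (Real.log m) ^ 2) * (1 / x)
  else 0

/-- The uniform density on `[0,1]`. -/
noncomputable def pUnif (x : ℝ) : ℝ := if 0 ≤ x ∧ x ≤ 1 then 1 else 0

/-!
On `(1, m]` the density is `c / x` with `c = 1 / (ln m)²`: its mass `c ln m = 1 / ln m` vanishes,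
but since `-(c/2) ln (c/x)²` is an antiderivative of `(c/x) ln (c/x)`, its share of the entropy is
`(c/2) (ln (c/m)² - ln c²) = 2 ln ln m / ln m + 1/2`, which tends to `1/2`.
-/

open Set

lemma one_lt_log_of_three_le {x : ℝ} (hx : 3 ≤ x) : 1 < log x :=
  (lt_log_iff_exp_lt (by linarith)).2 <| exp_one_lt_d9.trans_le <| by norm_num; linarith

lemma tendsto_log_div_self_atTop : Tendsto (fun t : ℝ => log t / t) atTop (𝓝 0) :=
  isLittleO_log_id_atTop.tendsto_div_nhds_zero

lemma tendsto_log_natCast_atTop : Tendsto (fun m : ℕ => log m) atTop atTop :=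
  tendsto_log_atTop.comp tendsto_natCast_atTop_atTop

lemma hasDerivAt_div_mul_log_div {c x : ℝ} (hc : c ≠ 0) (hx : x ≠ 0) :
    HasDerivAt (fun y => -(c / 2) * log (c / y) ^ 2) (c / x * log (c / x)) x := by
  refine HasDerivAt.congr_deriv ((((hasDerivAt_const x c).div (hasDerivAt_id x) hx).log
    (div_ne_zero hc hx)).pow 2 |>.const_mul (-(c / 2))) ?_
  simp only [Pi.div_apply, id_eq]
  field_simp
  ring

lemma intervalIntegrable_div_mul_log_div {a b : ℝ} (c : ℝ) (ha : 0 < a) (hb : 0 < b) :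
    IntervalIntegrable (fun x => c / x * log (c / x)) volume a b :=
  (continuous_mul_log.comp_continuousOn <| continuousOn_const.div continuousOn_id
    fun _ hx => ((lt_min ha hb).trans_le hx.1).ne').intervalIntegrable

lemma integral_div_mul_log_div {a b c : ℝ} (ha : 0 < a) (hb : 0 < b) (hc : c ≠ 0) :
    ∫ x in a..b, c / x * log (c / x) = c / 2 * (log (c / a) ^ 2 - log (c / b) ^ 2) := by
  rw [intervalIntegral.integral_eq_sub_of_hasDerivAt (fun x hx => hasDerivAt_div_mul_log_div hc
    ((lt_min ha hb).trans_le hx.1).ne') (intervalIntegrable_div_mul_log_div c ha hb)]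
  ring

lemma pmEx_of_mem_Icc {m : ℕ} {x : ℝ} (hx : x ∈ Icc 0 1) : pmEx m x = 1 - 1 / log m :=
  if_pos hx

lemma pmEx_of_mem_Ioc {m : ℕ} {x : ℝ} (hx : x ∈ Ioc 1 (m : ℝ)) :
    pmEx m x = 1 / log m ^ 2 / x := by
  rw [pmEx, if_neg fun h => hx.1.not_ge h.2, if_pos (show 1 < x ∧ x ≤ m from hx), mul_one_div]

lemma pmEx_mul_log_eq_indicator (m : ℕ) :
    (fun x => pmEx m x * log (pmEx m x)) =
      (Icc 0 1).indicator (fun _ => (1 - 1 / log m) * log (1 - 1 / log m)) +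
      (Ioc 1 (m : ℝ)).indicator (fun x => 1 / log m ^ 2 / x * log (1 / log m ^ 2 / x)) := by
  ext x
  by_cases h₁ : x ∈ Icc 0 1
  · have h₂ : x ∉ Ioc 1 (m : ℝ) := fun h => h.1.not_ge h₁.2
    simp [pmEx_of_mem_Icc h₁, h₁, h₂]
  by_cases h₂ : x ∈ Ioc 1 (m : ℝ)
  · simp [pmEx_of_mem_Ioc h₂, h₁, h₂]
  · simp only [pmEx, mem_Icc, mem_Ioc] at h₁ h₂ ⊢
    simp [h₁, h₂]

lemma diffEntropy_pmEx {m : ℕ} (hm : 3 ≤ m) :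
    diffEntropy (pmEx m) =
      -(1 - 1 / log m) * log (1 - 1 / log m) + 2 * log (log m) / log m + 1 / 2 := by
  rw [diffEntropy, pmEx_mul_log_eq_indicator]
  have hm₁ : (1 : ℝ) ≤ m := by exact_mod_cast (by omega : 1 ≤ m)
  have hL : 1 < log m := one_lt_log_of_three_le (by exact_mod_cast hm)
  set L := log m
  set c := 1 / L ^ 2
  have hc : c ≠ 0 := by positivity
  have hlog_c : log c = -(2 * log L) := by simp [c, log_pow]
  have hlog_cm : log (c / m) = -(2 * log L) - L := by rw [log_div hc (by positivity), hlog_c]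
  have hint : IntegrableOn (fun x => c / x * log (c / x)) (Ioc 1 (m : ℝ)) :=
    (intervalIntegrable_iff_integrableOn_Ioc_of_le hm₁).1
      (intervalIntegrable_div_mul_log_div c one_pos (by positivity))
  rw [integral_add' ((integrableOn_const (by simp)).integrable_indicator measurableSet_Icc)
    (hint.integrable_indicator measurableSet_Ioc), integral_indicator measurableSet_Icc,
    integral_indicator measurableSet_Ioc, setIntegral_const, ← intervalIntegral.integral_of_le hm₁,
    integral_div_mul_log_div one_pos (by positivity) hc, div_one, hlog_c, hlog_cm]
  simp only [volume_real_Icc, sub_zero, zero_le_one, max_eq_left, one_smul, c]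
  field_simp
  ring

lemma pmEx_le_one {m : ℕ} (hm : 3 ≤ m) (x : ℝ) : pmEx m x ≤ 1 := by
  have hL : 1 < log m := one_lt_log_of_three_le (by exact_mod_cast hm)
  unfold pmEx
  split_ifs with h₁ h₂
  · have : 0 < 1 / log m := by positivity
    linarith
  · exact mul_le_one₀ (div_le_one_of_le₀ (by nlinarith) (by positivity))
      (one_div_nonneg.2 (by linarith [h₂.1])) (div_le_one_of_le₀ h₂.1.le (by linarith))
  · exact zero_le_one

lemma pUnif_le_one (x : ℝ) : pUnif x ≤ 1 := by
  unfold pUnif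
  split_ifs <;> norm_num

lemma diffEntropy_pUnif : diffEntropy pUnif = 0 := by
  have h (y : ℝ) : pUnif y * log (pUnif y) = 0 := by
    unfold pUnif
    split_ifs <;> simp
  simp [diffEntropy, h]

lemma tendsto_pmEx (x : ℝ) : Tendsto (fun m : ℕ => pmEx m x) atTop (𝓝 (pUnif x)) := by
  by_cases h₁ : x ∈ Icc 0 1
  · rw [pUnif, if_pos (show 0 ≤ x ∧ x ≤ 1 from h₁)]
    simp only [pmEx_of_mem_Icc h₁]
    simpa [one_div] using (tendsto_inv_atTop_zero.comp tendsto_log_natCast_atTop).const_sub 1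
  rw [pUnif, if_neg (show ¬(0 ≤ x ∧ x ≤ 1) from h₁)]
  by_cases h₂ : x < 0
  · have hzero (m : ℕ) : pmEx m x = 0 := by simp [pmEx, not_le.2 h₂, h₂.trans one_pos |>.not_gt]
    simp only [hzero, tendsto_const_nhds]
  have hx : 1 < x := by
    by_contra! h
    exact h₁ ⟨not_lt.1 h₂, h⟩
  have h : Tendsto (fun m : ℕ => 1 / log m ^ 2 / x) atTop (𝓝 0) := by
    simpa using (tendsto_inv_atTop_zero.comp <|
      (tendsto_pow_atTop two_ne_zero).comp tendsto_log_natCast_atTop).div_const x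
  refine h.congr' ?_
  filter_upwards [eventually_ge_atTop ⌈x⌉₊] with m hm
  exact (pmEx_of_mem_Ioc ⟨hx, (Nat.le_ceil x).trans (by exact_mod_cast hm)⟩).symm

lemma tendsto_diffEntropy_pmEx :
    Tendsto (fun m : ℕ => diffEntropy (pmEx m)) atTop (𝓝 (1 / 2)) := by
  have h₁ : Tendsto (fun t : ℝ => 1 - 1 / t) atTop (𝓝 1) := by
    simpa [one_div] using tendsto_inv_atTop_zero.const_sub (1 : ℝ)
  have h : Tendsto (fun t : ℝ => -(1 - 1 / t) * log (1 - 1 / t) + 2 * log t / t + 1 / 2)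
      atTop (𝓝 (1 / 2)) := by
    simpa [mul_div_assoc] using ((h₁.neg.mul ((continuousAt_log one_ne_zero).tendsto.comp h₁)).add
      (tendsto_log_div_self_atTop.const_mul 2)).add_const (1 / 2 : ℝ)
  refine (h.comp tendsto_log_natCast_atTop).congr' ?_
  filter_upwards [eventually_ge_atTop 3] with m hm
  exact (diffEntropy_pmEx hm).symm

/-- The densities `pmEx m` converge pointwise (on `(0,1) ∪ (1,∞)`,
hence a.e.) to the uniform density on `[0,1]`, all densities are bounded by `1`,
`h(pUnif) = 0` while
`h(pmEx m) = -(1 - 1/ln m) ln(1 - 1/ln m) + 2 ln(ln m)/ln m + 1/2 → 1/2 ≠ 0`: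
the differential entropies do not converge to the entropy of the pointwise limit. -/
theorem entropy_not_convergent_counterexample :
    (∀ x ∈ Set.Ioo (0 : ℝ) 1 ∪ Set.Ioi (1 : ℝ),
        Tendsto (fun m : ℕ => pmEx m x) atTop (𝓝 (pUnif x))) ∧
    (∀ m : ℕ, 3 ≤ m → ∀ x : ℝ, pmEx m x ≤ 1) ∧
    (∀ x : ℝ, pUnif x ≤ 1) ∧
    diffEntropy pUnif = 0 ∧
    (∀ m : ℕ, 3 ≤ m →
        diffEntropy (pmEx m) =
          -(1 - 1 / Real.log m) * Real.log (1 - 1 / Real.log m)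
            + 2 * Real.log (Real.log m) / Real.log m + 1 / 2) ∧
    Tendsto (fun m : ℕ => diffEntropy (pmEx m)) atTop (𝓝 (1 / 2)) ∧
    (1 / 2 : ℝ) ≠ diffEntropy pUnif := by
  refine ⟨fun x _ => tendsto_pmEx x, fun _ => pmEx_le_one, pUnif_le_one, diffEntropy_pUnif,
    fun _ => diffEntropy_pmEx, tendsto_diffEntropy_pmEx, ?_⟩
  rw [diffEntropy_pUnif]
  norm_num
end

section
/- For m ≥ 3 define the probability density p_m on ℝ by p_m(x) = 1 − 1/ln m for x ∈ [0,1], p_m(x) = (1/(ln m)²)·(1/x) for x ∈ (1, m], and p_m(x) = 0 otherwise. Then for every non-negative, non-decreasing, super-logarithmic function l : [0,∞) → [0,∞), one has sup_{m ≥ 3} ∫ l(|x|) p_m(x) dx = +∞. More precisely, for every κ > 0 there is a threshold such that ∫ l(|x|) p_m(x) dx ≥ (3/8)κ for all sufficiently large m. -/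
/-!
On `(c, m]` with `c ≤ √m` the weight is `p_m(x) = 1 / (x ln² m)` and `l(x) ≥ κ ln x`, so the
moment is at least `κ / ln² m · ∫_c^m ln x / x dx = κ (ln² m - ln² c) / (2 ln² m)`, and
`ln c ≤ ln m / 2` makes this `≥ κ (1/2 - 1/8) = 3κ/8`.
-/

open MeasureTheory Real Filter Topology

lemma pmEx_of_mem_Ioc_s4 {m : ℕ} {x : ℝ} (hx : x ∈ Set.Ioc 1 (m : ℝ)) :
    pmEx m x = (Real.log m ^ 2)⁻¹ * x⁻¹ := by
  rw [pmEx, if_neg (fun h => by linarith [h.2, hx.1]), if_pos (show 1 < x ∧ x ≤ m from hx),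
    one_div, one_div]

lemma integral_log_div_self {a b : ℝ} (ha : 0 < a) (hab : a ≤ b) :
    ∫ x in a..b, Real.log x / x = (Real.log b ^ 2 - Real.log a ^ 2) / 2 := by
  have hpos : ∀ x ∈ Set.uIcc a b, 0 < x := fun x hx =>
    ha.trans_le (Set.uIcc_of_le hab ▸ hx).1
  have hderiv : ∀ x ∈ Set.uIcc a b,
      HasDerivAt (fun x => Real.log x ^ 2 / 2) (Real.log x / x) x := fun x hx => by
    have hsq : HasDerivAt (fun x => Real.log x ^ 2) (2 * Real.log x ^ 1 * x⁻¹) x :=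
      (Real.hasDerivAt_log (hpos x hx).ne').pow 2
    exact (hsq.div_const 2).congr_deriv (by field_simp)
  have hcont : ContinuousOn (fun x => Real.log x / x) (Set.uIcc a b) :=
    (Real.continuousOn_log.mono fun x hx => (hpos x hx).ne').div continuousOn_id
      fun x hx => (hpos x hx).ne'
  rw [intervalIntegral.integral_eq_sub_of_hasDerivAt hderiv hcont.intervalIntegrable]
  ring

lemma three_eighths_le_setIntegral_log_mul_pmEx {m : ℕ} {c : ℝ} (hc : 1 ≤ c)
    (hcm : c ^ 2 ≤ m) (hm : 1 < (m : ℝ)) :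
    3 / 8 ≤ ∫ x in Set.Ioc c (m : ℝ), Real.log x * pmEx m x := by
  have hL : 0 < Real.log m := Real.log_pos hm
  have hcm' : c ≤ m := by nlinarith
  have hlogc : 0 ≤ Real.log c := Real.log_nonneg hc
  have h2logc : 2 * Real.log c ≤ Real.log m := by
    simpa [Real.log_pow] using Real.log_le_log (by positivity) hcm
  have hintegrand : Set.EqOn (fun x => Real.log x * pmEx m x)
      (fun x => Real.log x / x / Real.log m ^ 2) (Set.Ioc c m) := fun x hx => by
    dsimp only
    rw [pmEx_of_mem_Ioc_s4 ⟨hc.trans_lt hx.1, hx.2⟩]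
    field_simp
  rw [setIntegral_congr_fun measurableSet_Ioc hintegrand, ← intervalIntegral.integral_of_le hcm',
    intervalIntegral.integral_div, integral_log_div_self (by linarith) hcm',
    le_div_iff₀ (by positivity)]
  nlinarith

theorem ofReal_le_lintegral_mul_pmEx {l : ℝ → ℝ} {κ c : ℝ} {m : ℕ} (hκ : 0 ≤ κ)
    (hl : ∀ x, c ≤ x → κ * Real.log x ≤ l x) (hc : 1 ≤ c) (hcm : c ^ 2 ≤ m)
    (hm : 1 < (m : ℝ)) :
    ENNReal.ofReal (3 / 8 * κ) ≤ ∫⁻ x, ENNReal.ofReal (l |x| * pmEx m x) := by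
  have hpmEx : ∀ x ∈ Set.Ioc c (m : ℝ), 0 ≤ Real.log x ∧ 0 ≤ pmEx m x := fun x hx => by
    have hx1 : 1 < x := hc.trans_lt hx.1
    rw [pmEx_of_mem_Ioc_s4 ⟨hx1, hx.2⟩]
    exact ⟨Real.log_nonneg hx1.le, by have := hx1.le; positivity⟩
  have hI := three_eighths_le_setIntegral_log_mul_pmEx hc hcm hm
  have hint : IntegrableOn (fun x => Real.log x * pmEx m x) (Set.Ioc c m) :=
    .of_integral_ne_zero (by linarith)
  calc ENNReal.ofReal (3 / 8 * κ)
      ≤ ENNReal.ofReal (∫ x in Set.Ioc c (m : ℝ), κ * (Real.log x * pmEx m x)) := by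
        rw [integral_const_mul]
        exact ENNReal.ofReal_le_ofReal (by nlinarith)
    _ = ∫⁻ x in Set.Ioc c (m : ℝ), ENNReal.ofReal (κ * (Real.log x * pmEx m x)) :=
        ofReal_integral_eq_lintegral_ofReal (hint.const_mul κ) <|
          (ae_restrict_iff' measurableSet_Ioc).2 <| ae_of_all _ fun x hx => by
            have := hpmEx x hx
            exact mul_nonneg hκ (mul_nonneg this.1 this.2)
    _ ≤ ∫⁻ x in Set.Ioc c (m : ℝ), ENNReal.ofReal (l |x| * pmEx m x) :=
        setLIntegral_mono' measurableSet_Ioc fun x hx => by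
          have hx0 : 0 ≤ x := by linarith [hx.1]
          rw [← mul_assoc, abs_of_nonneg hx0]
          exact ENNReal.ofReal_le_ofReal
            (mul_le_mul_of_nonneg_right (hl x hx.1.le) (hpmEx x hx).2)
    _ ≤ ∫⁻ x, ENNReal.ofReal (l |x| * pmEx m x) := setLIntegral_le_lintegral _ _

theorem SuperLog.exists_ofReal_le_lintegral_mul_pmEx {l : ℝ → ℝ} (hl : SuperLog l) {κ : ℝ}
    (hκ : 0 < κ) : ∃ M₀ : ℕ, 3 ≤ M₀ ∧ ∀ m : ℕ, M₀ ≤ m →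
      ENNReal.ofReal (3 / 8 * κ) ≤ ∫⁻ x, ENNReal.ofReal (l |x| * pmEx m x) := by
  obtain ⟨c, -, hc⟩ := hl κ hκ
  refine ⟨max 3 ⌈max c 1 ^ 2⌉₊, le_max_left _ _, fun m hm => ?_⟩
  have h3m : (3 : ℝ) ≤ m := by exact_mod_cast (le_max_left _ _).trans hm
  have hcm : max c 1 ^ 2 ≤ m :=
    (Nat.le_ceil _).trans (by exact_mod_cast (le_max_right _ _).trans hm)
  exact ofReal_le_lintegral_mul_pmEx hκ.le (fun x hx => hc x ((le_max_left c 1).trans hx))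
    (le_max_right c 1) hcm (by linarith)

lemma iSup_eq_top_of_forall_ofReal_le {ι : Sort*} {f : ι → ENNReal}
    (h : ∀ r : ℝ, 0 < r → ∃ i, ENNReal.ofReal r ≤ f i) : ⨆ i, f i = ⊤ := by
  refine iSup_eq_top.2 fun b hb => ?_
  obtain ⟨i, hi⟩ := h (b.toReal + 1) (by positivity)
  exact ⟨i, ((ENNReal.lt_ofReal_iff_toReal_lt hb.ne).2 (lt_add_one _)).trans_le hi⟩

theorem counterexample_superlog_moment_unbounded_general
    (l : ℝ → ℝ) (hl_super : SuperLog l) :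
    (⨆ m : {m : ℕ // 3 ≤ m}, ∫⁻ x, ENNReal.ofReal (l |x| * pmEx m.1 x)) = ⊤ ∧
    ∀ κ : ℝ, 0 < κ → ∃ M₀ : ℕ, 3 ≤ M₀ ∧ ∀ m : ℕ, M₀ ≤ m →
      ENNReal.ofReal (3 / 8 * κ) ≤ ∫⁻ x, ENNReal.ofReal (l |x| * pmEx m x) := by
  refine ⟨iSup_eq_top_of_forall_ofReal_le fun r hr => ?_,
    fun κ hκ => hl_super.exists_ofReal_le_lintegral_mul_pmEx hκ⟩
  obtain ⟨M₀, hM₀, hge⟩ :=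
    hl_super.exists_ofReal_le_lintegral_mul_pmEx (κ := 8 / 3 * r) (by positivity)
  exact ⟨⟨M₀, hM₀⟩, by simpa [← mul_assoc] using hge M₀ le_rfl⟩

/-- For every non-negative, non-decreasing, super-logarithmic
`l : [0,∞) → [0,∞)` the moments `∫ l(|x|) pmEx m (x) dx` are unbounded over `m ≥ 3`:
their supremum is `+∞`; more precisely, for every `κ > 0` one has
`∫ l(|x|) pmEx m (x) dx ≥ (3/8)κ` for all sufficiently large `m`. -/
theorem counterexample_superlog_moment_unbounded
    (l : ℝ → ℝ) (hl_nonneg : ∀ x : ℝ, 0 ≤ x → 0 ≤ l x)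
    (hl_mono : MonotoneOn l (Set.Ici 0)) (hl_super : SuperLog l) :
    (⨆ m : {m : ℕ // 3 ≤ m}, ∫⁻ x, ENNReal.ofReal (l |x| * pmEx m.1 x)) = ⊤ ∧
    ∀ κ : ℝ, 0 < κ → ∃ M₀ : ℕ, 3 ≤ M₀ ∧ ∀ m : ℕ, M₀ ≤ m →
      ENNReal.ofReal (3 / 8 * κ) ≤ ∫⁻ x, ENNReal.ofReal (l |x| * pmEx m x) :=
  counterexample_superlog_moment_unbounded_general l hl_super
end

section
/- Consider the channel Y = f(X) + N and suppose assumptions A2, A3, A4, A5 and A8 hold, with cost function C and cost bound A > 0. Then there exist a non-negative, non-decreasing, super-logarithmic function l : [0,∞) → [0,∞) and a finite constant L (one may take L = L_N + A) such that for every input distribution F ∈ P_A, the output density satisfies ∫ l(|y|) p(y;F) dy ≤ L; i.e. the output densities induced by P_A have a uniformly bounded super-logarithmic moment. -/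
open MeasureTheory Real Filter Topology

/-- Output density `p(y;F) = ∫ p_N (y - f x) dF(x)` of the channel `Y = f(X) + N`. -/
noncomputable def outputDensity (pN f : ℝ → ℝ) (F : Measure ℝ) (y : ℝ) : ℝ :=
  ∫ x, pN (y - f x) ∂F

/-- Mutual information
`I(F) = ∬ p_N(y - f x) ln [p_N(y - f x) / p(y;F)] dy dF(x)` of the channel `Y = f(X)+N`. -/
noncomputable def mutualInfo (pN f : ℝ → ℝ) (F : Measure ℝ) : ℝ :=
  ∫ x, (∫ y, pN (y - f x) *
      Real.log (pN (y - f x) / outputDensity pN f F y)) ∂F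

/-- The constraint set `P_A` of probability distributions `F` on `ℝ` with
`∫ C(|x|) dF(x) ≤ A` (integral of the non-negative cost taken in `[0,∞]`),
as a subset of the space of probability measures with the topology of
weak convergence. -/
def PA (C : ℝ → ℝ) (A : ℝ) : Set (ProbabilityMeasure ℝ) :=
  {F | ∫⁻ x, ENNReal.ofReal (C |x|) ∂(F : Measure ℝ) ≤ ENNReal.ofReal A}

/-!
Take `l t = min (C_N (t / 2)) (g (t / 2))`, where `g s` is the least cost `C |z|` of an input
with `s ≤ |f z|`. Both `C_N` and `g` are non-decreasing and super-logarithmic (for `g` by A3,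
since `s ≤ |f z|` forces `|z|` to be large once `s` is), hence so is `l`. As
`|n + f x| / 2 ≤ max |n| |f x|`, one of the two terms gives `l |n + f x| ≤ C_N |n| + C |x|`.
Writing `∫ l(|y|) p(y;F) dy = ∬ l(|n + f x|) p_N(n) dn dF(x)` (Tonelli and translation
invariance) and integrating this bound yields `L_N + A`.
-/

theorem IsPDF.integrable {p : ℝ → ℝ} (hp : IsPDF p) : Integrable p := by
  by_contra h
  simpa [integral_undef h] using hp.2.2

theorem IsPDF.lintegral_ofReal_eq_one {p : ℝ → ℝ} (hp : IsPDF p) :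
    ∫⁻ y, ENNReal.ofReal (p y) = 1 := by
  rw [← ofReal_integral_eq_lintegral_ofReal hp.integrable (ae_of_all _ hp.2.1), hp.2.2,
    ENNReal.ofReal_one]

theorem ofReal_integral_le_lintegral_ofReal {α : Type*} [MeasurableSpace α] {μ : Measure α}
    {g : α → ℝ} (hg : ∀ a, 0 ≤ g a) :
    ENNReal.ofReal (∫ a, g a ∂μ) ≤ ∫⁻ a, ENNReal.ofReal (g a) ∂μ :=
  calc ENNReal.ofReal (∫ a, g a ∂μ) ≤ ‖∫ a, g a ∂μ‖ₑ := by
        rw [Real.enorm_eq_ofReal_abs]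
        exact ENNReal.ofReal_le_ofReal (le_abs_self _)
    _ ≤ ∫⁻ a, ‖g a‖ₑ ∂μ := enorm_integral_le_lintegral_enorm _
    _ = ∫⁻ a, ENNReal.ofReal (g a) ∂μ := by simp_rw [Real.enorm_of_nonneg (hg _)]

theorem MonotoneOn.comp_max_zero {a : ℝ → ℝ} (ha : MonotoneOn a (Set.Ici 0)) :
    Monotone fun t => a (max t 0) :=
  fun _ _ h => ha (Set.mem_Ici.2 (le_max_right _ _)) (Set.mem_Ici.2 (le_max_right _ _))
    (max_le_max_right 0 h)

namespace SuperLog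

variable {a b : ℝ → ℝ}

theorem min (ha : SuperLog a) (hb : SuperLog b) : SuperLog fun t => min (a t) (b t) := by
  intro κ hκ
  obtain ⟨c₁, hc₁, ha⟩ := ha κ hκ
  obtain ⟨c₂, -, hb⟩ := hb κ hκ
  exact ⟨max c₁ c₂, lt_max_of_lt_left hc₁, fun x hx =>
    le_min (ha x (le_of_max_le_left hx)) (hb x (le_of_max_le_right hx))⟩

theorem comp_max_zero (ha : SuperLog a) : SuperLog fun t => a (max t 0) := by
  intro κ hκ
  obtain ⟨c, hc, ha⟩ := ha κ hκ
  exact ⟨c, hc, fun x hx => by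
    show κ * Real.log x ≤ a (max x 0)
    rw [max_eq_left (hc.le.trans hx)]
    exact ha x hx⟩

theorem comp_half (ha : SuperLog a) : SuperLog fun t => a (t / 2) := by
  intro κ hκ
  obtain ⟨c, hc, ha⟩ := ha (2 * κ) (by positivity)
  refine ⟨max (2 * c) 4, by positivity, fun x hx => ?_⟩
  have hx4 : 4 ≤ x := le_of_max_le_right hx
  have hlog : Real.log x ≤ 2 * Real.log (x / 2) := by
    rw [Real.log_div (by linarith) two_ne_zero]
    have : Real.log 4 = 2 * Real.log 2 := by
      rw [show (4 : ℝ) = 2 ^ 2 by norm_num, Real.log_pow, Nat.cast_ofNat]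
    linarith [Real.log_le_log (by norm_num) hx4]
  calc κ * Real.log x ≤ 2 * κ * Real.log (x / 2) := by nlinarith
    _ ≤ a (x / 2) := ha _ (by linarith [le_of_max_le_left hx])

end SuperLog

/-- Takes the junk value `sInf ∅ = 0` when `|f|` never reaches `t`. -/
noncomputable def costToReach (C f : ℝ → ℝ) (t : ℝ) : ℝ :=
  sInf ((fun z => C |z|) '' {z | t ≤ |f z|})

section costToReach

variable {C f : ℝ → ℝ}

theorem bddBelow_image_cost (hC : ∀ x, 0 ≤ x → 0 ≤ C x) (s : Set ℝ) :
    BddBelow ((fun z => C |z|) '' s) :=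
  ⟨0, by rintro _ ⟨z, -, rfl⟩; exact hC _ (abs_nonneg z)⟩

theorem costToReach_nonneg (hC : ∀ x, 0 ≤ x → 0 ≤ C x) (t : ℝ) :
    0 ≤ costToReach C f t :=
  Real.sInf_nonneg (by rintro _ ⟨z, -, rfl⟩; exact hC _ (abs_nonneg z))

theorem costToReach_le (hC : ∀ x, 0 ≤ x → 0 ≤ C x) (x : ℝ) :
    costToReach C f |f x| ≤ C |x| :=
  csInf_le (bddBelow_image_cost hC _) ⟨x, show |f x| ≤ |f x| from le_rfl, rfl⟩

theorem nonempty_abs_ge (hf : Tendsto (fun x => |f x|) (cocompact ℝ) atTop) (t : ℝ) :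
    {z | t ≤ |f z|}.Nonempty :=
  (hf.eventually (eventually_ge_atTop t)).exists

theorem costToReach_mono (hC : ∀ x, 0 ≤ x → 0 ≤ C x)
    (hf : Tendsto (fun x => |f x|) (cocompact ℝ) atTop) : Monotone (costToReach C f) :=
  fun _ _ h => csInf_le_csInf (bddBelow_image_cost hC _) ((nonempty_abs_ge hf _).image _)
    (Set.image_mono fun _ hz => h.trans hz)

theorem superLog_costToReach (hf : Continuous f)
    (hCf : ∀ κ, 0 < κ → ∃ c, 0 < c ∧ ∀ x, c ≤ |x| → κ * Real.log |f x| ≤ C |x|)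
    (hf_unbdd : Tendsto (fun x => |f x|) (cocompact ℝ) atTop) : SuperLog (costToReach C f) := by
  intro κ hκ
  obtain ⟨c, -, hc⟩ := hCf κ hκ
  obtain ⟨M, hM⟩ :=
    (isCompact_closedBall (0 : ℝ) c).exists_bound_of_continuousOn hf.continuousOn
  refine ⟨max (M + 1) 1, by positivity, fun t ht => ?_⟩
  have htM : M < t := by linarith [le_of_max_le_left ht]
  have ht0 : 0 < t := by linarith [le_of_max_le_right ht]
  refine le_csInf ((nonempty_abs_ge hf_unbdd t).image _) ?_
  rintro _ ⟨z, hz, rfl⟩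
  have hzc : c ≤ |z| := by
    by_contra! h
    have := hM z (by simpa using h.le)
    rw [Real.norm_eq_abs] at this
    linarith [show t ≤ |f z| from hz]
  calc κ * Real.log t ≤ κ * Real.log |f z| := by gcongr; exact hz
    _ ≤ C |z| := hc z hzc

end costToReach

theorem min_half_abs_add_le {a b : ℝ → ℝ} (ha : Monotone a) (hb : Monotone b)
    (ha₀ : ∀ t, 0 ≤ a t) (hb₀ : ∀ t, 0 ≤ b t) (u v : ℝ) :
    min (a (|u + v| / 2)) (b (|u + v| / 2)) ≤ a |u| + b |v| := by
  have := abs_add_le u v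
  rcases le_total |v| |u| with h | h
  · exact (min_le_left _ _).trans <| (ha (by linarith)).trans (le_add_of_nonneg_right (hb₀ _))
  · exact (min_le_right _ _).trans <| (hb (by linarith)).trans (le_add_of_nonneg_left (ha₀ _))

section outputDensity

variable {pN f l : ℝ → ℝ}

theorem lintegral_ofReal_mul_outputDensity_le (hpN : Measurable pN) (hpN₀ : ∀ n, 0 ≤ pN n)
    (hf : Measurable f) (hl : Measurable l) (hl₀ : ∀ y, 0 ≤ l y)
    (F : Measure ℝ) [SFinite F] :
    ∫⁻ y, ENNReal.ofReal (l y * outputDensity pN f F y)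
      ≤ ∫⁻ x, ∫⁻ n, ENNReal.ofReal (l (n + f x) * pN n) ∂volume ∂F :=
  calc ∫⁻ y, ENNReal.ofReal (l y * outputDensity pN f F y)
      ≤ ∫⁻ y, ∫⁻ x, ENNReal.ofReal (l y * pN (y - f x)) ∂F := lintegral_mono fun y => by
        rw [outputDensity, ← integral_const_mul]
        exact ofReal_integral_le_lintegral_ofReal fun x => mul_nonneg (hl₀ y) (hpN₀ _)
    _ = ∫⁻ x, ∫⁻ y, ENNReal.ofReal (l y * pN (y - f x)) ∂volume ∂F :=
        lintegral_lintegral_swap ((hl.comp measurable_fst).mul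
          (hpN.comp (measurable_fst.sub (hf.comp measurable_snd)))).ennreal_ofReal.aemeasurable
    _ = ∫⁻ x, ∫⁻ n, ENNReal.ofReal (l (n + f x) * pN n) ∂volume ∂F :=
        lintegral_congr fun x => by
          rw [← lintegral_add_right_eq_self _ (f x)]
          simp

theorem lintegral_ofReal_mul_outputDensity_le_add {u w : ℝ → ℝ} (hpN : IsPDF pN)
    (hf : Measurable f) (hl : Measurable l) (hl₀ : ∀ y, 0 ≤ l y) (hu₀ : ∀ n, 0 ≤ u n)
    (hw₀ : ∀ x, 0 ≤ w x) (hluw : ∀ x n, l (n + f x) ≤ u n + w x)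
    (F : Measure ℝ) [IsProbabilityMeasure F] :
    ∫⁻ y, ENNReal.ofReal (l y * outputDensity pN f F y)
      ≤ (∫⁻ n, ENNReal.ofReal (u n * pN n)) + ∫⁻ x, ENNReal.ofReal (w x) ∂F := by
  have hpN_meas : Measurable pN := hpN.1
  have hpN₀ : ∀ n, 0 ≤ pN n := hpN.2.1
  have hsplit : ∀ x n, ENNReal.ofReal ((u n + w x) * pN n)
      = ENNReal.ofReal (u n * pN n) + ENNReal.ofReal (w x) * ENNReal.ofReal (pN n) := by
    intro x n
    rw [add_mul, ENNReal.ofReal_add (mul_nonneg (hu₀ n) (hpN₀ n))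
      (mul_nonneg (hw₀ x) (hpN₀ n)), ENNReal.ofReal_mul (hw₀ x)]
  calc ∫⁻ y, ENNReal.ofReal (l y * outputDensity pN f F y)
      ≤ ∫⁻ x, ∫⁻ n, ENNReal.ofReal (l (n + f x) * pN n) ∂volume ∂F :=
        lintegral_ofReal_mul_outputDensity_le hpN_meas hpN₀ hf hl hl₀ F
    _ ≤ ∫⁻ x, ∫⁻ n, ENNReal.ofReal ((u n + w x) * pN n) ∂volume ∂F :=
        lintegral_mono fun x => lintegral_mono fun n =>
          ENNReal.ofReal_le_ofReal (mul_le_mul_of_nonneg_right (hluw x n) (hpN₀ n))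
    _ = ∫⁻ x, ((∫⁻ n, ENNReal.ofReal (u n * pN n)) + ENNReal.ofReal (w x)) ∂F := by
        refine lintegral_congr fun x => ?_
        simp_rw [hsplit x]
        rw [lintegral_add_right' _ (hpN_meas.ennreal_ofReal.aemeasurable.const_mul _),
          lintegral_const_mul' _ _ ENNReal.ofReal_ne_top, hpN.lintegral_ofReal_eq_one, mul_one]
    _ = (∫⁻ n, ENNReal.ofReal (u n * pN n)) + ∫⁻ x, ENNReal.ofReal (w x) ∂F := by
        rw [lintegral_add_left measurable_const, lintegral_const, measure_univ, mul_one]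

end outputDensity

theorem output_superlog_moment_uniformly_bounded_general
    (f pN C : ℝ → ℝ) (A : ℝ) (hA : 0 < A)
    -- A2: the cost function is non-decreasing and non-negative
    (hA2_nonneg : ∀ x : ℝ, 0 ≤ x → 0 ≤ C x)
    -- A3: `C(|x|) = ω(ln |f(x)|)`
    (hA3 : ∀ κ : ℝ, 0 < κ → ∃ c : ℝ, 0 < c ∧ ∀ x : ℝ, c ≤ |x| → κ * Real.log |f x| ≤ C |x|)
    -- A4: `f` is continuous
    (hA4 : Continuous f)
    -- A5: `|f(x)|` is non-decreasing in `|x|` and `|f(x)| → ∞` as `|x| → ∞`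
    (hA5_inf : Tendsto (fun x : ℝ => |f x|) (cocompact ℝ) atTop)
    -- the noise has a density
    (hpN : IsPDF pN)
    -- A8: noise super-logarithmic moment equal to `L_N < ∞`
    (CN : ℝ → ℝ) (hCN_mono : MonotoneOn CN (Set.Ici 0))
    (hCN_nonneg : ∀ x : ℝ, 0 ≤ x → 0 ≤ CN x) (hCN_super : SuperLog CN)
    (LN : ℝ) (hLN : 0 ≤ LN)
    (hCN_mom : ∫⁻ n, ENNReal.ofReal (CN |n| * pN n) = ENNReal.ofReal LN) :
    ∃ l : ℝ → ℝ, (∀ x : ℝ, 0 ≤ x → 0 ≤ l x) ∧ MonotoneOn l (Set.Ici 0) ∧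
      SuperLog l ∧
      ∀ F : ProbabilityMeasure ℝ, F ∈ PA C A →
        ∫⁻ y, ENNReal.ofReal (l |y| * outputDensity pN f (F : Measure ℝ) y)
          ≤ ENNReal.ofReal (LN + A) := by
  set a : ℝ → ℝ := fun s => CN (max s 0)
  set b : ℝ → ℝ := costToReach C f
  have ha₀ : ∀ s, 0 ≤ a s := fun s => hCN_nonneg _ (le_max_right s 0)
  have hb₀ : ∀ s, 0 ≤ b s := costToReach_nonneg hA2_nonneg
  have ha_mono : Monotone a := hCN_mono.comp_max_zero
  have hb_mono : Monotone b := costToReach_mono hA2_nonneg hA5_inf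
  set l : ℝ → ℝ := fun t => min (a (t / 2)) (b (t / 2))
  have hl_mono : Monotone l := fun s t h =>
    min_le_min (ha_mono (by linarith)) (hb_mono (by linarith))
  have hl₀ : ∀ t, 0 ≤ l t := fun t => le_min (ha₀ _) (hb₀ _)
  have hl_le : ∀ x n, l |n + f x| ≤ CN |n| + C |x| := fun x n =>
    calc l |n + f x| ≤ a |n| + b |f x| := min_half_abs_add_le ha_mono hb_mono ha₀ hb₀ n (f x)
      _ ≤ CN |n| + C |x| := by
        simp only [a, max_eq_left (abs_nonneg n)]
        gcongr
        exact costToReach_le hA2_nonneg x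
  refine ⟨l, fun t _ => hl₀ t, hl_mono.monotoneOn _,
    hCN_super.comp_max_zero.comp_half.min (superLog_costToReach hA4 hA3 hA5_inf).comp_half,
    fun F hF => ?_⟩
  calc ∫⁻ y, ENNReal.ofReal (l |y| * outputDensity pN f (F : Measure ℝ) y)
      ≤ (∫⁻ n, ENNReal.ofReal (CN |n| * pN n))
          + ∫⁻ x, ENNReal.ofReal (C |x|) ∂(F : Measure ℝ) :=
        lintegral_ofReal_mul_outputDensity_le_add hpN hA4.measurable
          (hl_mono.measurable.comp measurable_abs) (fun y => hl₀ _)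
          (fun n => hCN_nonneg _ (abs_nonneg n)) (fun x => hA2_nonneg _ (abs_nonneg x)) hl_le _
    _ ≤ ENNReal.ofReal LN + ENNReal.ofReal A := by rw [hCN_mom]; gcongr; exact hF
    _ = ENNReal.ofReal (LN + A) := (ENNReal.ofReal_add hLN hA.le).symm

/-- Under A2, A3, A4, A5 and A8, there is a non-negative,
non-decreasing, super-logarithmic function `l` and a finite constant
`L = L_N + A` such that every output density induced by an input `F ∈ P_A`
satisfies `∫ l(|y|) p(y;F) dy ≤ L`: the outputs have a uniformly bounded
super-logarithmic moment. -/
theorem output_superlog_moment_uniformly_bounded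
    (f pN C : ℝ → ℝ) (A : ℝ) (hA : 0 < A)
    -- A2: the cost function is non-decreasing and non-negative
    (hA2_mono : MonotoneOn C (Set.Ici 0)) (hA2_nonneg : ∀ x : ℝ, 0 ≤ x → 0 ≤ C x)
    -- A3: `C(|x|) = ω(ln |f(x)|)`
    (hA3 : ∀ κ : ℝ, 0 < κ → ∃ c : ℝ, 0 < c ∧ ∀ x : ℝ, c ≤ |x| → κ * Real.log |f x| ≤ C |x|)
    -- A4: `f` is continuous
    (hA4 : Continuous f)
    -- A5: `|f(x)|` is non-decreasing in `|x|` and `|f(x)| → ∞` as `|x| → ∞`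
    (hA5_mono : ∀ x z : ℝ, |x| ≤ |z| → |f x| ≤ |f z|)
    (hA5_inf : Tendsto (fun x : ℝ => |f x|) (cocompact ℝ) atTop)
    -- the noise has a density
    (hpN : IsPDF pN)
    -- A8: noise super-logarithmic moment equal to `L_N < ∞`
    (CN : ℝ → ℝ) (hCN_mono : MonotoneOn CN (Set.Ici 0))
    (hCN_nonneg : ∀ x : ℝ, 0 ≤ x → 0 ≤ CN x) (hCN_super : SuperLog CN)
    (LN : ℝ) (hLN : 0 ≤ LN)
    (hCN_mom : ∫⁻ n, ENNReal.ofReal (CN |n| * pN n) = ENNReal.ofReal LN) :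
    ∃ l : ℝ → ℝ, (∀ x : ℝ, 0 ≤ x → 0 ≤ l x) ∧ MonotoneOn l (Set.Ici 0) ∧
      SuperLog l ∧
      ∀ F : ProbabilityMeasure ℝ, F ∈ PA C A →
        ∫⁻ y, ENNReal.ofReal (l |y| * outputDensity pN f (F : Measure ℝ) y)
          ≤ ENNReal.ofReal (LN + A) :=
  output_superlog_moment_uniformly_bounded_general f pN C A hA hA2_nonneg hA3 hA4 hA5_inf hpN CN
    hCN_mono hCN_nonneg hCN_super LN hLN hCN_mom
end
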